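/- Let X and Y = {1,...,n} be the input and label spaces, h : X × Y → ℝ a predictor and r : X → ℝ a rejector, with predicted label ĥ(x) = argmax_{y∈Y} h(x,y). Define the augmented scorer h̃ : X × {1,...,n+1} → ℝ by h̃(x,y) = h(x,y) for y ∈ Y and h̃(x, n+1) = max_{y∈Y} h(x,y) − r(x), with score-based decision h̃̂(x) = n+1 if h̃(x,n+1) ≥ max_{y∈Y} h̃(x,y), else h̃̂(x) = argmax_{y∈Y} h̃(x,y) (same tie-breaking as ĥ). Then for every (x,y) ∈ X × Y and c ∈ [0,1], the score-based abstention loss 1[h̃̂(x) ≠ y]·1[h̃̂(x) ≠ n+1] + c·1[h̃̂(x) = n+1] equals the predictor-rejector abstention loss 1[ĥ(x) ≠ y]·1[r(x) > 0] + c·1[r(x) ≤ 0]. -/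
import Mathlib


/-- Maximum of a real-valued function over `Fin n`, `n > 0`. -/
noncomputable def fmax {n : ℕ} (hn : 0 < n) (f : Fin n → ℝ) : ℝ :=
  Finset.univ.sup' (Finset.univ_nonempty_iff.mpr ⟨⟨0, hn⟩⟩) f

/-- Augmented scorer: `h̃(y) = h(y)` for `y ∈ Y` and `h̃(n+1) = max_y h(y) − r`
(the rejection label is modeled by `none`). -/
noncomputable def htilde {n : ℕ} (hn : 0 < n) (h : Fin n → ℝ) (r : ℝ) :
    Option (Fin n) → ℝ
  | some y => h y
  | none => fmax hn h - r

/-- Score-based decision: abstain (`none`) if the rejection score is at least the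
maximal label score, otherwise predict the label `pred` (the argmax of `h`,
with the same tie-breaking as in the predictor-rejector formulation). -/
noncomputable def scoreDecision {n : ℕ} (hn : 0 < n) (h : Fin n → ℝ) (r : ℝ)
    (pred : Fin n) : Option (Fin n) :=
  if fmax hn (fun y => htilde hn h r (some y)) ≤ htilde hn h r none then none
  else some pred

theorem stmt_13 {n : ℕ} (hn : 2 ≤ n) {X : Type*}
    (h : X → Fin n → ℝ) (r : X → ℝ) (pred : X → Fin n)
    (hpred : ∀ x y, h x y ≤ h x (pred x))
    (c : ℝ) (hc : c ∈ Set.Icc (0 : ℝ) 1) (x : X) (y : Fin n) :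
    (if scoreDecision (by omega) (h x) (r x) (pred x) ≠ some y then (1 : ℝ) else 0)
        * (if scoreDecision (by omega : 0 < n) (h x) (r x) (pred x) ≠ none then (1 : ℝ) else 0)
      + c * (if scoreDecision (by omega : 0 < n) (h x) (r x) (pred x) = none then (1 : ℝ) else 0)
    = (if pred x ≠ y then (1 : ℝ) else 0) * (if 0 < r x then (1 : ℝ) else 0)
      + c * (if r x ≤ 0 then (1 : ℝ) else 0) := by
  have hpos : 0 < n := by omega
  have key : scoreDecision hpos (h x) (r x) (pred x)
      = if r x ≤ 0 then none else some (pred x) := by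
    unfold scoreDecision
    have : fmax hpos (fun y => htilde hpos (h x) (r x) (some y)) = fmax hpos (h x) := rfl
    rw [this]
    simp only [htilde]
    congr 1
    simp only [eq_iff_iff]
    constructor
    · intro hle; linarith
    · intro hle; linarith
  rw [key]
  by_cases hr : r x ≤ 0
  · simp [hr, not_lt.mpr hr]
  · have : 0 < r x := lt_of_not_ge hr
    simp [hr, this]
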